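/- Let the setting be type A_N or type B_N, let (i_t,k_t), 1 ≤ t ≤ T, be a snake, and let (p_1,…,p_T) ∈ P̄_{(i_t,k_t)} be a non-overlapping tuple. Suppose (i,k) ∈ C_{p_t,+} (resp. (i,k) ∈ C_{p_t,−}) for some 1 ≤ t ≤ T. Then: (i) (i,k) ∉ C_{p_s,+} (resp. (i,k) ∉ C_{p_s,−}) for every s ≠ t; (ii) in type A, (i,k) ∉ C_{p_s,−} (resp. (i,k) ∉ C_{p_s,+}) for every 1 ≤ s ≤ T; in type B, if (i,k) ∈ C_{p_s,−} (resp. (i,k) ∈ C_{p_s,+}) for some 1 ≤ s ≤ T, then s = t+1 (resp. s = t−1) and i = N. -/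

import Mathlib

namespace Paper

/-- The ambient setting: type `A N` (with `N ≥ 1`) or type `B N ε`
(with `N ≥ 2` and `0 < ε < 1/2`). -/
inductive Setting where
  | A (N : ℕ)
  | B (N : ℕ) (ε : ℝ)

namespace Setting

/-- The rank `N`. -/
def N : Setting → ℕ
  | A n => n
  | B n _ => n

/-- Validity of the parameters of the setting. -/
def valid : Setting → Prop
  | A n => 1 ≤ n
  | B n ε => 2 ≤ n ∧ 0 < ε ∧ ε < 1 / 2

end Setting

/-- The numbers `r_i` : in type A all equal `1`; in type B, `r_N = 1` and `r_i = 2` for `i < N`. -/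
def rr : Setting → ℕ → ℕ
  | .A _, _ => 1
  | .B n _, j => if j = n then 1 else 2

/-- The set `X` in type `A_N`. -/
def XA (n : ℕ) : Set (ℕ × ℤ) :=
  {ik | 1 ≤ ik.1 ∧ ik.1 ≤ n ∧ ((ik.1 : ℤ) - ik.2) % 2 = 1}

/-- The set `X` in type `B_N`. -/
def XB (n : ℕ) : Set (ℕ × ℤ) :=
  {ik | (ik.1 = n ∧ ik.2 % 2 = 1) ∨ (1 ≤ ik.1 ∧ ik.1 < n ∧ ik.2 % 2 = 0)}

/-- The set `X ⊆ I × ℤ`. -/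
def X : Setting → Set (ℕ × ℤ)
  | .A n => XA n
  | .B n _ => XB n

/-- The set `W = {(i,k) : (i, k - r_i) ∈ X}`. -/
def W (S : Setting) : Set (ℕ × ℤ) :=
  {ik | (ik.1, ik.2 - (rr S ik.1 : ℤ)) ∈ X S}

/-- The `r`-th point of a path (a finite list of points of the plane). -/
def pt (p : List (ℝ × ℝ)) (r : ℕ) : ℝ × ℝ := p.getD r (0, 0)

/-- The set of paths `𝒫_{i,k}` in type `A_N`. -/
def pathsA (n : ℕ) (i : ℕ) (k : ℤ) : Set (List (ℝ × ℝ)) :=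
  {p | p.length = n + 2 ∧
    (∀ r, r < n + 2 → (pt p r).1 = (r : ℝ)) ∧
    (pt p 0).2 = (i : ℝ) + (k : ℝ) ∧
    (pt p (n + 1)).2 = (n : ℝ) + 1 - (i : ℝ) + (k : ℝ) ∧
    (∀ r, r ≤ n → (pt p (r + 1)).2 - (pt p r).2 = 1 ∨ (pt p (r + 1)).2 - (pt p r).2 = -1)}

/-- The set of paths `𝒫_{N,ℓ}` in type `B_N`. -/
def pathsBspin (n : ℕ) (ε : ℝ) (l : ℤ) : Set (List (ℝ × ℝ)) :=
  {p | p.length = n + 1 ∧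
    (if l % 4 = 3 then ∀ r, r < n → (pt p r).1 = 2 * (r : ℝ)
     else ∀ r, r < n → (pt p r).1 = 4 * (n : ℝ) - 2 - 2 * (r : ℝ)) ∧
    (pt p n).1 = 2 * (n : ℝ) - 1 ∧
    (pt p 0).2 = (l : ℝ) + 2 * (n : ℝ) - 1 ∧
    (∀ r, r + 2 ≤ n → (pt p (r + 1)).2 - (pt p r).2 = 2 ∨ (pt p (r + 1)).2 - (pt p r).2 = -2) ∧
    ((pt p n).2 - (pt p (n - 1)).2 = 1 + ε ∨ (pt p n).2 - (pt p (n - 1)).2 = -(1 + ε))}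

/-- The set of paths `𝒫_{i,k}` in type `B_N`. -/
def pathsB (n : ℕ) (ε : ℝ) (i : ℕ) (k : ℤ) : Set (List (ℝ × ℝ)) :=
  if i = n then pathsBspin n ε k
  else {p | ∃ a b : List (ℝ × ℝ),
    a ∈ pathsBspin n ε (k - (2 * (n : ℤ) - 2 * (i : ℤ) - 1)) ∧
    b ∈ pathsBspin n ε (k + (2 * (n : ℤ) - 2 * (i : ℤ) - 1)) ∧
    p = a ++ b.reverse ∧
    (pt a n).1 = (pt b n).1 ∧ 0 < (pt a n).2 - (pt b n).2}

/-- The set of paths `𝒫_{i,k}`. -/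
def P : Setting → ℕ → ℤ → Set (List (ℝ × ℝ))
  | .A n => pathsA n
  | .B n ε => pathsB n ε

/-- The map `ι : X → ℤ × ℤ` of type `B_N`. -/
def iotaB (n : ℕ) (ik : ℕ × ℤ) : ℤ × ℤ :=
  if ik.1 = n then (2 * (n : ℤ) - 1, ik.2)
  else if (2 * (n : ℤ) + ik.2 - 2 * (ik.1 : ℤ)) % 4 = 2 then (2 * (ik.1 : ℤ), ik.2)
  else (4 * (n : ℤ) - 2 - 2 * (ik.1 : ℤ), ik.2)

/-- The corners of a path: `Cp S p true` is the set `C_{p,+}` of upper corners, and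
`Cp S p false` is the set `C_{p,-}` of lower corners. -/
def Cp (S : Setting) (p : List (ℝ × ℝ)) (up : Bool) : Set (ℕ × ℤ) :=
  match S with
  | .A n =>
    {jl | 1 ≤ jl.1 ∧ jl.1 ≤ n ∧
      pt p jl.1 = ((jl.1 : ℝ), (jl.2 : ℝ)) ∧
      (pt p (jl.1 - 1)).2 = (jl.2 : ℝ) + (if up then 1 else -1) ∧
      (pt p (jl.1 + 1)).2 = (jl.2 : ℝ) + (if up then 1 else -1)}
  | .B n ε =>
    {jl | jl ∈ XB n ∧
      ((∃ r : ℕ, 1 ≤ r ∧ r + 1 < p.length ∧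
          pt p r = (((iotaB n jl).1 : ℝ), ((iotaB n jl).2 : ℝ)) ∧
          (iotaB n jl).1 ≠ 0 ∧ (iotaB n jl).1 ≠ 2 * (n : ℤ) - 1 ∧
          (iotaB n jl).1 ≠ 4 * (n : ℤ) - 2 ∧
          (if up then (pt p r).2 < (pt p (r - 1)).2 ∧ (pt p r).2 < (pt p (r + 1)).2
           else (pt p (r - 1)).2 < (pt p r).2 ∧ (pt p (r + 1)).2 < (pt p r).2))
       ∨ (jl.1 = n ∧
          (if up then (2 * (n : ℝ) - 1, (jl.2 : ℝ) - ε) ∈ p ∧ (2 * (n : ℝ) - 1, (jl.2 : ℝ) + ε) ∉ p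
           else (2 * (n : ℝ) - 1, (jl.2 : ℝ) + ε) ∈ p ∧ (2 * (n : ℝ) - 1, (jl.2 : ℝ) - ε) ∉ p)))}

/-- `p'` is obtained from `p` by replacing the point `q` by the point `q'`. -/
def Replace1 (p p' : List (ℝ × ℝ)) (q q' : ℝ × ℝ) : Prop :=
  ∃ r : ℕ, r < p.length ∧ pt p r = q ∧ p'.length = p.length ∧ pt p' r = q' ∧
    ∀ s, s < p.length → s ≠ r → pt p' s = pt p s

/-- `p'` is obtained from `p` by replacing the point `q1` by `q1'` and the point `q2` by `q2'`. -/
def Replace2 (p p' : List (ℝ × ℝ)) (q1 q1' q2 q2' : ℝ × ℝ) : Prop :=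
  ∃ r s : ℕ, r < p.length ∧ s < p.length ∧ r ≠ s ∧ pt p r = q1 ∧ pt p s = q2 ∧
    p'.length = p.length ∧ pt p' r = q1' ∧ pt p' s = q2' ∧
    ∀ u, u < p.length → u ≠ r → u ≠ s → pt p' u = pt p u

/-- The path `p` can be lowered at `(j, l)`: `(j, l - r_j) ∈ C_{p,+}` and
`(j, l + r_j) ∉ C_{p,+}`. -/
def CanLower (S : Setting) (p : List (ℝ × ℝ)) (j : ℕ) (l : ℤ) : Prop :=
  (j, l - (rr S j : ℤ)) ∈ Cp S p true ∧ (j, l + (rr S j : ℤ)) ∉ Cp S p true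

/-- `p'` is the result of the lowering move at `(j,l)` applied to the path `p ∈ 𝒫_{i,k}`;
written `p' = p 𝒜_{j,l}⁻¹`. -/
def LoweredTo (S : Setting) (i : ℕ) (k : ℤ) (j : ℕ) (l : ℤ)
    (p p' : List (ℝ × ℝ)) : Prop :=
  p ∈ P S i k ∧ p' ∈ P S i k ∧ CanLower S p j l ∧
  (match S with
   | .A _ => Replace1 p p' ((j : ℝ), (l : ℝ) - 1) ((j : ℝ), (l : ℝ) + 1)
   | .B n ε =>
     if j = n then
       Replace1 p p' (2 * (n : ℝ) - 1, (l : ℝ) - 1 - ε) (2 * (n : ℝ) - 1, (l : ℝ) + 1 + ε)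
     else if j = n - 1 then
       Replace2 p p'
         (((iotaB n (j, l - 2)).1 : ℝ), (l : ℝ) - 2) (((iotaB n (j, l - 2)).1 : ℝ), (l : ℝ) + 2)
         (2 * (n : ℝ) - 1, (l : ℝ) - 1 + ε) (2 * (n : ℝ) - 1, (l : ℝ) + 1 - ε)
     else
       Replace1 p p'
         (((iotaB n (j, l - 2)).1 : ℝ), (l : ℝ) - 2) (((iotaB n (j, l - 2)).1 : ℝ), (l : ℝ) + 2))

/-- The path `p` can be raised at `(j,l)`: it is of the form `p' 𝒜_{j,l}⁻¹`. -/
def CanRaise (S : Setting) (i : ℕ) (k : ℤ) (p : List (ℝ × ℝ)) (j : ℕ) (l : ℤ) : Prop :=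
  ∃ p', LoweredTo S i k j l p' p

/-- The monomial group `ℳ`, realised as exponent functions: the free abelian group on the
symbols `Y_{i,k}`, `(i,k) ∈ X`, is identified with finitely supported functions `(ℕ × ℤ) → ℤ`,
written additively. -/
def Y (x : ℕ × ℤ) : (ℕ × ℤ) → ℤ := fun z => if z = x then 1 else 0

noncomputable def ind (s : Prop) : ℤ := @ite ℤ s (Classical.propDecidable s) 1 0

/-- The monomial `m(p)` of a path: `∏ Y_{j,l}` over upper corners times `∏ Y_{j,l}⁻¹`
over lower corners. -/
noncomputable def mon (S : Setting) (p : List (ℝ × ℝ)) : (ℕ × ℤ) → ℤ :=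
  fun x => ind (x ∈ Cp S p true) - ind (x ∈ Cp S p false)

/-- The monomials `A_{j,l}`, with the conventions `Y_{0,·} = Y_{N+1,·} = 1`. -/
def Amon (S : Setting) (j : ℕ) (l : ℤ) : (ℕ × ℤ) → ℤ :=
  match S with
  | .A n =>
      Y (j, l + 1) + Y (j, l - 1) - (if j = 1 then 0 else Y (j - 1, l))
        - (if j = n then 0 else Y (j + 1, l))
  | .B n _ =>
      if j = n then Y (n, l + 1) + Y (n, l - 1) - Y (n - 1, l)
      else if j = n - 1 then
        Y (n - 1, l + 2) + Y (n - 1, l - 2) - (if j = 1 then 0 else Y (n - 2, l))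
          - Y (n, l + 1) - Y (n, l - 1)
      else
        Y (j, l + 2) + Y (j, l - 2) - (if j = 1 then 0 else Y (j - 1, l)) - Y (j + 1, l)

/-- A monomial is dominant iff all its exponents are nonnegative. -/
def Dominant (m : (ℕ × ℤ) → ℤ) : Prop := ∀ x, 0 ≤ m x

/-- A monomial is anti-dominant iff all its exponents are nonpositive. -/
def AntiDominant (m : (ℕ × ℤ) → ℤ) : Prop := ∀ x, m x ≤ 0

/-- `(i',k')` is in snake position with respect to `(i,k)`. -/
def SnakePos : Setting → ℕ × ℤ → ℕ × ℤ → Prop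
  | .A _, ik, ik' => |(ik'.1 : ℤ) - (ik.1 : ℤ)| + 2 ≤ ik'.2 - ik.2
  | .B n _, ik, ik' =>
      if ik.1 = n ∧ ik'.1 = n then
        2 ≤ ik'.2 - ik.2 ∧ (ik'.2 - ik.2) % 4 = 2
      else if ik.1 = n ∨ ik'.1 = n then
        2 * |(ik'.1 : ℤ) - (ik.1 : ℤ)| + 3 ≤ ik'.2 - ik.2 ∧
          (ik'.2 - ik.2) % 4 = (2 * |(ik'.1 : ℤ) - (ik.1 : ℤ)| - 1) % 4
      else
        2 * |(ik'.1 : ℤ) - (ik.1 : ℤ)| + 4 ≤ ik'.2 - ik.2 ∧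
          (ik'.2 - ik.2) % 4 = (2 * |(ik'.1 : ℤ) - (ik.1 : ℤ)|) % 4

/-- A snake: a sequence of points of `X`, each in snake position w.r.t. the previous one. -/
def IsSnake (S : Setting) {T : ℕ} (w : Fin T → ℕ × ℤ) : Prop :=
  (∀ t, w t ∈ X S) ∧
  ∀ (t : Fin T) (h : (t : ℕ) + 1 < T), SnakePos S (w t) (w ⟨(t : ℕ) + 1, h⟩)

/-- `p` is strictly above `p'`. -/
def StrictlyAbove (p p' : List (ℝ × ℝ)) : Prop :=
  ∀ a ∈ p, ∀ b ∈ p', a.1 = b.1 → a.2 < b.2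

/-- A tuple of paths is non-overlapping. -/
def NonOverlapping {T : ℕ} (ps : Fin T → List (ℝ × ℝ)) : Prop :=
  ∀ s t : Fin T, s < t → StrictlyAbove (ps s) (ps t)

/-- The set `𝒫̄` of non-overlapping tuples of paths attached to a snake. -/
def PBar (S : Setting) {T : ℕ} (w : Fin T → ℕ × ℤ) : Set (Fin T → List (ℝ × ℝ)) :=
  {ps | (∀ t, ps t ∈ P S (w t).1 (w t).2) ∧ NonOverlapping ps}

/-- The product `∏_t m(p_t)` of the monomials of a tuple of paths. -/
noncomputable def tmon (S : Setting) {T : ℕ} (ps : Fin T → List (ℝ × ℝ)) : (ℕ × ℤ) → ℤ :=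
  ∑ t, mon S (ps t)

/-- Lowering move at `jl` on a tuple of paths: one component is lowered, the others
are unchanged. -/
def TLoweredTo (S : Setting) {T : ℕ} (w : Fin T → ℕ × ℤ) (jl : ℕ × ℤ)
    (ps ps' : Fin T → List (ℝ × ℝ)) : Prop :=
  ∃ t, LoweredTo S (w t).1 (w t).2 jl.1 jl.2 (ps t) (ps' t) ∧ ∀ s, s ≠ t → ps' s = ps s

/-- Sequences of raising/lowering moves on a single path; the list records, for each move,
whether it was a lowering move (`true`) or a raising move (`false`), and its site. -/
inductive MoveSeq (S : Setting) (i : ℕ) (k : ℤ) :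
    List (ℝ × ℝ) → List (ℝ × ℝ) → List (Bool × (ℕ × ℤ)) → Prop where
  | nil (p : List (ℝ × ℝ)) : MoveSeq S i k p p []
  | lower {p q r : List (ℝ × ℝ)} {jl : ℕ × ℤ} {ms : List (Bool × (ℕ × ℤ))} :
      jl ∈ W S → LoweredTo S i k jl.1 jl.2 p q → MoveSeq S i k q r ms →
      MoveSeq S i k p r ((true, jl) :: ms)
  | raise {p q r : List (ℝ × ℝ)} {jl : ℕ × ℤ} {ms : List (Bool × (ℕ × ℤ))} :
      jl ∈ W S → LoweredTo S i k jl.1 jl.2 q p → MoveSeq S i k q r ms →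
      MoveSeq S i k p r ((false, jl) :: ms)

/-- Sequences of raising/lowering moves on tuples of paths, all of whose intermediate
tuples are non-overlapping. -/
inductive TMoveSeq (S : Setting) {T : ℕ} (w : Fin T → ℕ × ℤ) :
    (Fin T → List (ℝ × ℝ)) → (Fin T → List (ℝ × ℝ)) → List (Bool × (ℕ × ℤ)) → Prop where
  | nil (ps : Fin T → List (ℝ × ℝ)) : TMoveSeq S w ps ps []
  | lower {ps qs rs : Fin T → List (ℝ × ℝ)} {jl : ℕ × ℤ} {ms : List (Bool × (ℕ × ℤ))} :
      jl ∈ W S → TLoweredTo S w jl ps qs → NonOverlapping qs →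
      TMoveSeq S w qs rs ms → TMoveSeq S w ps rs ((true, jl) :: ms)
  | raise {ps qs rs : Fin T → List (ℝ × ℝ)} {jl : ℕ × ℤ} {ms : List (Bool × (ℕ × ℤ))} :
      jl ∈ W S → TLoweredTo S w jl qs ps → NonOverlapping qs →
      TMoveSeq S w qs rs ms → TMoveSeq S w ps rs ((false, jl) :: ms)

/-- Sequences of lowering moves on tuples of paths, all of whose intermediate tuples
are non-overlapping; the list records the sites, in order. -/
inductive TLowerSeq (S : Setting) {T : ℕ} (w : Fin T → ℕ × ℤ) :
    (Fin T → List (ℝ × ℝ)) → (Fin T → List (ℝ × ℝ)) → List (ℕ × ℤ) → Prop where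
  | nil (ps : Fin T → List (ℝ × ℝ)) : TLowerSeq S w ps ps []
  | cons {ps qs rs : Fin T → List (ℝ × ℝ)} {jl : ℕ × ℤ} {ms : List (ℕ × ℤ)} :
      jl ∈ W S → TLoweredTo S w jl ps qs → NonOverlapping qs →
      TLowerSeq S w qs rs ms → TLowerSeq S w ps rs (jl :: ms)

/-- Weak order on paths with the same x-coordinates: `p` is weakly above `p'`. -/
def WeaklyAbove (p p' : List (ℝ × ℝ)) : Prop :=
  p.length = p'.length ∧ ∀ r, r < p.length → (pt p r).2 ≤ (pt p' r).2

/-- `p` is weakly below `p'`. -/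
def WeaklyBelow (p p' : List (ℝ × ℝ)) : Prop :=
  p.length = p'.length ∧ ∀ r, r < p.length → (pt p' r).2 ≤ (pt p r).2

/-- The path `top(p, p')`. -/
def topPath (p p' : List (ℝ × ℝ)) : List (ℝ × ℝ) :=
  List.zipWith (fun a b => (a.1, min a.2 b.2)) p p'

/-- The distinguished point contained in the highest path `p⁺_{i,k}`. -/
def highPoint : Setting → ℕ → ℤ → ℝ × ℝ
  | .A _, i, k => ((i : ℝ), (k : ℝ))
  | .B n ε, i, k =>
      if i = n then (2 * (n : ℝ) - 1, (k : ℝ) - ε)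
      else (((iotaB n (i, k)).1 : ℝ), ((iotaB n (i, k)).2 : ℝ))

/-- The distinguished point contained in the lowest path `p⁻_{i,k}`. -/
def lowPoint : Setting → ℕ → ℤ → ℝ × ℝ
  | .A n, i, k => ((n : ℝ) + 1 - (i : ℝ), (k : ℝ) + (n : ℝ) + 1)
  | .B n ε, i, k =>
      if i = n then (2 * (n : ℝ) - 1, (k : ℝ) + 4 * (n : ℝ) - 2 + ε)
      else (((iotaB n (i, k + 4 * (n : ℤ) - 2)).1 : ℝ),
            ((iotaB n (i, k + 4 * (n : ℤ) - 2)).2 : ℝ))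

/-- The highest path `p⁺_{i,k}` : the path of `𝒫_{i,k}` with no lower corners. -/
noncomputable def highestPath (S : Setting) (i : ℕ) (k : ℤ) : List (ℝ × ℝ) :=
  Classical.epsilon fun p => p ∈ P S i k ∧ Cp S p false = ∅

/-- The lowest path `p⁻_{i,k}` : the path of `𝒫_{i,k}` with no upper corners. -/
noncomputable def lowestPath (S : Setting) (i : ℕ) (k : ℤ) : List (ℝ × ℝ) :=
  Classical.epsilon fun p => p ∈ P S i k ∧ Cp S p true = ∅
/-! Every corner of a path is witnessed by a point of the path: the lattice point `(i, k)` in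
type A, the point `ι(i, k)` for a non-spin corner in type B, and the point `(2N-1, k ∓ ε)`
for a spin corner `(N, k)`. Points of different paths of a non-overlapping tuple never
coincide, which gives (i) and, except for spin corners in type B, also (ii); within a single
path a point is never both an upper and a lower corner, since in type B the column of a
non-spin corner is visited only once. For a spin corner, an upper corner of `p_t` lies just
below a lower corner of `p_s`, so `t < s`; a path strictly in between would have to cross
the column `2N-1` at a height in `(k - ε, k + ε)`, whereas every path crosses it at a height
in `ℤ ± ε`, and `ε < 1/2`. -/

theorem pt_mem {p : List (ℝ × ℝ)} {r : ℕ} (h : r < p.length) : pt p r ∈ p := by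
  rw [pt, List.getD_eq_getElem _ _ h]
  exact List.getElem_mem h

theorem NonOverlapping.eq_of_mem {T : ℕ} {ps : Fin T → List (ℝ × ℝ)} (hno : NonOverlapping ps)
    {s t : Fin T} {q : ℝ × ℝ} (hs : q ∈ ps s) (ht : q ∈ ps t) : s = t := by
  by_contra hst
  rcases lt_or_gt_of_ne hst with h | h
  · exact lt_irrefl _ (hno s t h q hs q ht rfl)
  · exact lt_irrefl _ (hno t s h q ht q hs rfl)

def cornerPoint : Setting → ℕ → ℤ → Bool → ℝ × ℝ
  | .A _, i, k, _ => ((i : ℝ), (k : ℝ))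
  | .B n ε, i, k, up =>
      if i = n then (2 * (n : ℝ) - 1, if up then (k : ℝ) - ε else (k : ℝ) + ε)
      else (((iotaB n (i, k)).1 : ℝ), (k : ℝ))

theorem iotaB_snd (n : ℕ) (z : ℕ × ℤ) : (iotaB n z).2 = z.2 := by
  unfold iotaB
  split_ifs <;> rfl

theorem Cp_B_of_ne {n : ℕ} {ε : ℝ} {i : ℕ} {k : ℤ} {p : List (ℝ × ℝ)} {up : Bool}
    (hi : i ≠ n) (h : (i, k) ∈ Cp (.B n ε) p up) :
    ∃ r : ℕ, 1 ≤ r ∧ r + 1 < p.length ∧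
      pt p r = (((iotaB n (i, k)).1 : ℝ), (k : ℝ)) ∧
      (iotaB n (i, k)).1 ≠ 2 * (n : ℤ) - 1 ∧
      (if up then (pt p r).2 < (pt p (r - 1)).2 ∧ (pt p r).2 < (pt p (r + 1)).2
       else (pt p (r - 1)).2 < (pt p r).2 ∧ (pt p (r + 1)).2 < (pt p r).2) := by
  obtain ⟨-, ⟨r, h1, h2, h3, -, h5, -, h7⟩ | ⟨hin, -⟩⟩ := h
  · exact ⟨r, h1, h2, by rw [h3, iotaB_snd], h5, h7⟩
  · exact absurd hin hi

theorem Cp_B_spin {n : ℕ} {ε : ℝ} {k : ℤ} {p : List (ℝ × ℝ)} {up : Bool}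
    (h : (n, k) ∈ Cp (.B n ε) p up) :
    (2 * (n : ℝ) - 1, if up then (k : ℝ) - ε else (k : ℝ) + ε) ∈ p ∧
      (2 * (n : ℝ) - 1, if up then (k : ℝ) + ε else (k : ℝ) - ε) ∉ p := by
  obtain ⟨-, ⟨r, -, -, -, -, hx, -⟩ | ⟨-, hm⟩⟩ := h
  · exact absurd (by simp [iotaB]) hx
  · cases up <;> simpa using hm

theorem cornerPoint_mem {S : Setting} {i' : ℕ} {k' : ℤ} {p : List (ℝ × ℝ)}
    (hp : p ∈ P S i' k') {i : ℕ} {k : ℤ} {up : Bool} (h : (i, k) ∈ Cp S p up) :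
    cornerPoint S i k up ∈ p := by
  cases S with
  | A n =>
    obtain ⟨-, hin, hpt, -⟩ := h
    rw [cornerPoint, ← hpt]
    exact pt_mem (by rw [hp.1]; omega)
  | B n ε =>
    by_cases hi : i = n
    · subst hi
      rw [cornerPoint, if_pos rfl]
      exact (Cp_B_spin h).1
    · obtain ⟨r, -, hr, hpt, -⟩ := Cp_B_of_ne hi h
      rw [cornerPoint, if_neg hi, ← hpt]
      exact pt_mem (by omega)

theorem notMem_Cp_of_ne {S : Setting} {T : ℕ} {w : Fin T → ℕ × ℤ}
    {ps : Fin T → List (ℝ × ℝ)} (hps : ps ∈ PBar S w) {s t : Fin T} (hst : s ≠ t)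
    {i : ℕ} {k : ℤ} {up : Bool} (ht : (i, k) ∈ Cp S (ps t) up) : (i, k) ∉ Cp S (ps s) up :=
  fun hs => hst (hps.2.eq_of_mem (cornerPoint_mem (hps.1 s) hs) (cornerPoint_mem (hps.1 t) ht))

theorem Cp_A_not_up_down {n : ℕ} {p : List (ℝ × ℝ)} {i : ℕ} {k : ℤ}
    (hup : (i, k) ∈ Cp (.A n) p true) (hdn : (i, k) ∈ Cp (.A n) p false) : False := by
  obtain ⟨-, -, -, hup, -⟩ := hup
  obtain ⟨-, -, -, hdn, -⟩ := hdn
  simp only [if_true, Bool.false_eq_true, if_false] at hup hdn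
  linarith

theorem Cp_A_up_notMem_Cp_down {n T : ℕ} {w : Fin T → ℕ × ℤ} {ps : Fin T → List (ℝ × ℝ)}
    (hps : ps ∈ PBar (.A n) w) {s t : Fin T} {i : ℕ} {k : ℤ}
    (ht : (i, k) ∈ Cp (.A n) (ps t) true) : (i, k) ∉ Cp (.A n) (ps s) false := by
  intro hs
  have hpt : cornerPoint (.A n) i k true ∈ ps t := cornerPoint_mem (hps.1 t) ht
  obtain rfl := hps.2.eq_of_mem (cornerPoint_mem (hps.1 s) hs) hpt
  exact Cp_A_not_up_down ht hs

/-- Horizontal offset, up to the orientation sign, of the `u`-th point of a type B path from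
the middle column `2N-1`; the two halves of a non-spin path run in opposite directions. -/
def colOffset (n u : ℕ) : ℤ :=
  if u < n then 2 * u - (2 * n - 1) else if u ≤ n + 1 then 0 else 2 * u - (2 * n + 3)

theorem colOffset_inj {n u u' : ℕ} (h : colOffset n u = colOffset n u') (h0 : colOffset n u ≠ 0) :
    u = u' := by
  unfold colOffset at h h0
  split_ifs at h h0 <;> omega

theorem colOffset_add_eq_neg {n j : ℕ} (hj : j ≤ n) :
    colOffset n (n + 1 + j) = -colOffset n (n - j) := by
  unfold colOffset
  split_ifs <;> omega

def orient (l : ℤ) : ℝ := if l % 4 = 3 then 1 else -1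

theorem orient_ne_zero (l : ℤ) : orient l ≠ 0 := by
  unfold orient
  split_ifs <;> norm_num

theorem orient_add_eq_neg {k c : ℤ} (hk : k % 2 = 0) (hc : c % 2 = 1) :
    orient (k + c) = -orient (k - c) := by
  unfold orient
  split_ifs <;> first | omega | norm_num

theorem pathsBspin_fst {n : ℕ} {ε : ℝ} {l : ℤ} {q : List (ℝ × ℝ)} (hq : q ∈ pathsBspin n ε l)
    {r : ℕ} (hr : r ≤ n) : (pt q r).1 = 2 * (n : ℝ) - 1 + orient l * colOffset n r := by
  obtain ⟨-, hx, hxn, -⟩ := hq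
  rcases hr.lt_or_eq with hr | rfl
  · rw [colOffset, if_pos hr, orient]
    split_ifs at hx ⊢ <;> (rw [hx r hr]; push_cast; ring)
  · rw [hxn, colOffset, if_neg (lt_irrefl _), if_pos (by omega)]
    simp

theorem pathsB_fst {n : ℕ} {ε : ℝ} {i : ℕ} {k : ℤ} {p : List (ℝ × ℝ)}
    (hp : p ∈ pathsB n ε i k) (hk : i ≠ n → k % 2 = 0) :
    ∃ σ : ℝ, σ ≠ 0 ∧ ∀ r < p.length, (pt p r).1 = 2 * (n : ℝ) - 1 + σ * colOffset n r := by
  unfold pathsB at hp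
  split_ifs at hp with hi
  · exact ⟨orient k, orient_ne_zero k, fun r hr => pathsBspin_fst hp (by rw [hp.1] at hr; omega)⟩
  · obtain ⟨a, b, ha, hb, rfl, -, -⟩ := hp
    refine ⟨orient (k - (2 * n - 2 * i - 1)), orient_ne_zero _, fun r hr => ?_⟩
    have hla : a.length = n + 1 := ha.1
    have hlb : b.length = n + 1 := hb.1
    rw [List.length_append, List.length_reverse, hla, hlb] at hr
    rcases lt_or_ge r (n + 1) with h | h
    · rw [pt, List.getD_append _ _ _ _ (by omega), ← pt, pathsBspin_fst ha (by omega)]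
    · obtain ⟨j, rfl⟩ : ∃ j, r = n + 1 + j := ⟨r - (n + 1), by omega⟩
      rw [pt, List.getD_append_right _ _ _ _ (by omega), List.getD_reverse _ (by omega), ← pt,
        hla, hlb, show n + 1 - 1 - (n + 1 + j - (n + 1)) = n - j by omega,
        pathsBspin_fst hb (by omega), orient_add_eq_neg (hk hi) (by omega),
        colOffset_add_eq_neg (by omega)]
      push_cast
      ring

theorem pathsB_index_unique {n : ℕ} {ε : ℝ} {i : ℕ} {k : ℤ} {p : List (ℝ × ℝ)}
    (hp : p ∈ pathsB n ε i k) (hk : i ≠ n → k % 2 = 0) {r r' : ℕ} (hr : r < p.length)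
    (hr' : r' < p.length) (hx : (pt p r).1 = (pt p r').1) (hmid : (pt p r).1 ≠ 2 * (n : ℝ) - 1) :
    r = r' := by
  obtain ⟨σ, hσ, hfst⟩ := pathsB_fst hp hk
  rw [hfst r hr, hfst r' hr'] at hx
  rw [hfst r hr] at hmid
  refine colOffset_inj (by exact_mod_cast mul_left_cancel₀ hσ (add_left_cancel hx)) ?_
  rintro h0
  simp [h0] at hmid

theorem Cp_B_not_up_down_of_ne {n : ℕ} {ε : ℝ} {i' : ℕ} {k' : ℤ} {p : List (ℝ × ℝ)}
    (hp : p ∈ pathsB n ε i' k') (hk : i' ≠ n → k' % 2 = 0) {i : ℕ} {k : ℤ} (hi : i ≠ n)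
    (hup : (i, k) ∈ Cp (.B n ε) p true) (hdn : (i, k) ∈ Cp (.B n ε) p false) : False := by
  obtain ⟨r, -, hr, hpt, hmid, hlt⟩ := Cp_B_of_ne hi hup
  obtain ⟨r', -, hr', hpt', -, hlt'⟩ := Cp_B_of_ne hi hdn
  obtain rfl : r = r' := pathsB_index_unique hp hk (by omega) (by omega) (by rw [hpt, hpt'])
    (by rw [hpt]; dsimp only; exact_mod_cast hmid)
  simp only [if_true, Bool.false_eq_true, if_false] at hlt hlt'
  linarith [hlt.1, hlt'.1]

theorem pathsBspin_snd_int {n : ℕ} {ε : ℝ} {l : ℤ} {q : List (ℝ × ℝ)} (hq : q ∈ pathsBspin n ε l)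
    {u : ℕ} (hu : u ≤ n - 1) : ∃ m : ℤ, (pt q u).2 = m := by
  obtain ⟨-, -, -, h0, hstep, -⟩ := hq
  induction u with
  | zero => exact ⟨l + 2 * n - 1, by rw [h0]; push_cast; ring⟩
  | succ u ih =>
    obtain ⟨m, hm⟩ := ih (by omega)
    rcases hstep u (by omega) with h | h
    · exact ⟨m + 2, by push_cast; linarith⟩
    · exact ⟨m - 2, by push_cast; linarith⟩

theorem exists_mid_mem_pathsB {n : ℕ} {ε : ℝ} {i : ℕ} {k : ℤ} {p : List (ℝ × ℝ)}
    (hp : p ∈ pathsB n ε i k) :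
    ∃ (y : ℝ) (m : ℤ), (2 * (n : ℝ) - 1, y) ∈ p ∧ (y = m + ε ∨ y = m - ε) := by
  obtain ⟨q, hq, hqp⟩ : ∃ q, (∃ l, q ∈ pathsBspin n ε l) ∧ q ⊆ p := by
    unfold pathsB at hp
    split_ifs at hp
    · exact ⟨p, ⟨k, hp⟩, List.Subset.refl p⟩
    · obtain ⟨a, -, ha, -, rfl, -, -⟩ := hp
      exact ⟨a, ⟨_, ha⟩, List.subset_append_left _ _⟩
  obtain ⟨l, hq⟩ := hq
  obtain ⟨m, hm⟩ := pathsBspin_snd_int hq (le_refl (n - 1))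
  obtain ⟨hlen, -, hxn, -, -, hlast⟩ := hq
  have hmem : (2 * (n : ℝ) - 1, (pt q n).2) ∈ p := hqp (by rw [← hxn]; exact pt_mem (by omega))
  rcases hlast with h | h
  · exact ⟨_, m + 1, hmem, Or.inl (by push_cast; linarith)⟩
  · exact ⟨_, m - 1, hmem, Or.inr (by push_cast; linarith)⟩

theorem notMem_Ioo_of_eq_int_add_or_sub {ε y : ℝ} {m k : ℤ} (hε : ε < 1 / 2)
    (hy : y = m + ε ∨ y = m - ε) : y ∉ Set.Ioo ((k : ℝ) - ε) (k + ε) := by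
  rintro ⟨hlo, hhi⟩
  rcases hy with rfl | rfl
  · have h1 : ((k - m : ℤ) : ℝ) < 1 := by push_cast; linarith
    have h2 : (0 : ℝ) < ((k - m : ℤ) : ℝ) := by push_cast; linarith
    norm_cast at h1 h2
    omega
  · have h1 : ((m - k : ℤ) : ℝ) < 1 := by push_cast; linarith
    have h2 : (0 : ℝ) < ((m - k : ℤ) : ℝ) := by push_cast; linarith
    norm_cast at h1 h2
    omega

theorem eq_succ_of_Cp_B_spin_up_down {n T : ℕ} {ε : ℝ} (hε : 0 < ε) (hε' : ε < 1 / 2)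
    {w : Fin T → ℕ × ℤ} {ps : Fin T → List (ℝ × ℝ)} (hps : ps ∈ PBar (.B n ε) w)
    {s t : Fin T} {k : ℤ} (hup : (n, k) ∈ Cp (.B n ε) (ps t) true)
    (hdn : (n, k) ∈ Cp (.B n ε) (ps s) false) : (s : ℕ) = t + 1 := by
  obtain ⟨hkt, hkt'⟩ := Cp_B_spin hup
  obtain ⟨hks, -⟩ := Cp_B_spin hdn
  simp only [if_true, Bool.false_eq_true, if_false] at hkt hkt' hks
  have hts : t < s := by
    rcases lt_trichotomy s t with h | rfl | h
    · have := hps.2 s t h _ hks _ hkt rfl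
      dsimp only at this
      linarith
    · exact absurd hks hkt'
    · exact h
  by_contra hne
  have hu : (t : ℕ) + 1 < T := by omega
  obtain ⟨y, m, hy, hym⟩ := exists_mid_mem_pathsB (hps.1 ⟨t + 1, hu⟩)
  have hlo := hps.2 t ⟨t + 1, hu⟩ (Fin.lt_def.2 (Nat.lt_succ_self _)) _ hkt _ hy rfl
  have hhi := hps.2 ⟨t + 1, hu⟩ s (Fin.lt_def.2 (by simp only; omega)) _ hy _ hks rfl
  exact notMem_Ioo_of_eq_int_add_or_sub hε' hym ⟨hlo, hhi⟩

theorem Cp_B_up_down {n T : ℕ} {ε : ℝ} (hε : 0 < ε) (hε' : ε < 1 / 2)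
    {w : Fin T → ℕ × ℤ} (hw : ∀ u, w u ∈ XB n) {ps : Fin T → List (ℝ × ℝ)}
    (hps : ps ∈ PBar (.B n ε) w) {s t : Fin T} {i : ℕ} {k : ℤ}
    (hup : (i, k) ∈ Cp (.B n ε) (ps t) true) (hdn : (i, k) ∈ Cp (.B n ε) (ps s) false) :
    (s : ℕ) = t + 1 ∧ i = n := by
  by_cases hi : i = n
  · subst hi
    exact ⟨eq_succ_of_Cp_B_spin_up_down hε hε' hps hup hdn, rfl⟩
  · have hmem_t := cornerPoint_mem (hps.1 t) hup
    have hmem_s := cornerPoint_mem (hps.1 s) hdn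
    simp only [cornerPoint, if_neg hi] at hmem_t hmem_s
    obtain rfl := hps.2.eq_of_mem hmem_s hmem_t
    have hk : (w s).1 ≠ n → (w s).2 % 2 = 0 := fun h =>
      ((hw s).resolve_left fun h' => h h'.1).2.2
    exact (Cp_B_not_up_down_of_ne (hps.1 s) hk hi hup hdn).elim

theorem stmt6_general (S : Setting) (hS : S.valid) {T : ℕ}
    (w : Fin T → ℕ × ℤ) (hw : IsSnake S w)
    (ps : Fin T → List (ℝ × ℝ)) (hps : ps ∈ PBar S w)
    (t : Fin T) (i : ℕ) (k : ℤ) :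
    ((i, k) ∈ Cp S (ps t) true →
      (∀ s : Fin T, s ≠ t → (i, k) ∉ Cp S (ps s) true) ∧
      (∀ s : Fin T, (i, k) ∈ Cp S (ps s) false →
        (∃ n ε, S = Setting.B n ε) ∧ (s : ℕ) = (t : ℕ) + 1 ∧ i = S.N)) ∧
    ((i, k) ∈ Cp S (ps t) false →
      (∀ s : Fin T, s ≠ t → (i, k) ∉ Cp S (ps s) false) ∧
      (∀ s : Fin T, (i, k) ∈ Cp S (ps s) true →
        (∃ n ε, S = Setting.B n ε) ∧ (s : ℕ) + 1 = (t : ℕ) ∧ i = S.N)) := by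
  cases S with
  | A n =>
    exact ⟨fun ht => ⟨fun s hst => notMem_Cp_of_ne hps hst ht,
        fun s hs => (Cp_A_up_notMem_Cp_down hps ht hs).elim⟩,
      fun ht => ⟨fun s hst => notMem_Cp_of_ne hps hst ht,
        fun s hs => (Cp_A_up_notMem_Cp_down hps hs ht).elim⟩⟩
  | B n ε =>
    obtain ⟨-, hε, hε'⟩ := hS
    refine ⟨fun ht => ⟨fun s hst => notMem_Cp_of_ne hps hst ht, fun s hs => ?_⟩,
      fun ht => ⟨fun s hst => notMem_Cp_of_ne hps hst ht, fun s hs => ?_⟩⟩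
    · obtain ⟨hst, rfl⟩ := Cp_B_up_down hε hε' hw.1 hps ht hs
      exact ⟨⟨_, _, rfl⟩, hst, rfl⟩
    · obtain ⟨hts, rfl⟩ := Cp_B_up_down hε hε' hw.1 hps hs ht
      exact ⟨⟨_, _, rfl⟩, hts.symm, rfl⟩

/-- disjointness of corners for non-overlapping tuples of paths attached to a
snake. If `(i,k)` is an upper (resp. lower) corner of `p_t`, then (i) it is not an upper
(resp. lower) corner of any `p_s`, `s ≠ t`; and (ii) in type A it is not a lower (resp.
upper) corner of any `p_s`, while in type B if it is a lower (resp. upper) corner of some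
`p_s` then `s = t+1` (resp. `s = t-1`) and `i = N`. -/
theorem stmt6 (S : Setting) (hS : S.valid) {T : ℕ} (hT : 1 ≤ T)
    (w : Fin T → ℕ × ℤ) (hw : IsSnake S w)
    (ps : Fin T → List (ℝ × ℝ)) (hps : ps ∈ PBar S w)
    (t : Fin T) (i : ℕ) (k : ℤ) :
    ((i, k) ∈ Cp S (ps t) true →
      (∀ s : Fin T, s ≠ t → (i, k) ∉ Cp S (ps s) true) ∧
      (∀ s : Fin T, (i, k) ∈ Cp S (ps s) false →
        (∃ n ε, S = Setting.B n ε) ∧ (s : ℕ) = (t : ℕ) + 1 ∧ i = S.N)) ∧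
    ((i, k) ∈ Cp S (ps t) false →
      (∀ s : Fin T, s ≠ t → (i, k) ∉ Cp S (ps s) false) ∧
      (∀ s : Fin T, (i, k) ∈ Cp S (ps s) true →
        (∃ n ε, S = Setting.B n ε) ∧ (s : ℕ) + 1 = (t : ℕ) ∧ i = S.N)) :=
  stmt6_general S hS w hw ps hps t i k

end Paper
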